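/- Let p>1 and let (λ_n)_{n≥1} be a positive real sequence with Λ_n = Σ_{k=1}^n λ_k. Suppose L = sup_{n≥1} ( Λ_{n+1}/λ_{n+1} − Λ_n/λ_n ) satisfies L < p. Then for every nonnegative real sequence (x_n)_{n≥1} with Σ_{n=1}^∞ x_n^p < ∞, one has Σ_{n=1}^∞ ( (1/Λ_n) Σ_{k=1}^n λ_k x_k )^p ≤ (p/(p−L))^p Σ_{n=1}^∞ x_n^p. -/

import Mathlib

/-!
Let `A_n = weightedMean l x n = (∑_{k ≤ n} λ_k x_k) / Λ_n` and `w_n = partialSumRatio l n =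
Λ_n / λ_n ≥ 1`, so that `x_n = w_n A_n - (w_n - 1) A_{n-1}`. Multiplying by `C A_n^{p-1}` with
`C = p / (p - L)`, Young's inequality `A_{n-1} A_n^{p-1} ≤ A_{n-1}^p / p + (1 - 1/p) A_n^p` and
`w_{n+1} - w_n ≤ L` give `A_n^p + D_{n+1} A_n^p ≤ C x_n A_n^{p-1} + D_n A_{n-1}^p` with
`D_n = C (w_n - 1) / p ≥ 0`. This telescopes to `∑ A_n^p ≤ C ∑ x_n A_n^{p-1}`, and Hölder's
inequality absorbs the right-hand side, leaving `∑ A_n^p ≤ C^p ∑ x_n^p` for every partial sum.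
-/

open Finset Real

section RealInequalities

variable {p : ℝ}

lemma mul_rpow_sub_one_le {a b : ℝ} (hp : 1 < p) (ha : 0 ≤ a) (hb : 0 ≤ b) :
    a * b ^ (p - 1) ≤ a ^ p / p + (1 - p⁻¹) * b ^ p := by
  have hpq := HolderConjugate.conjExponent hp
  have hyoung := young_inequality_of_nonneg ha (rpow_nonneg hb (p - 1)) hpq
  rwa [← rpow_mul hb, hpq.sub_one_mul_conj, div_eq_mul_inv (b ^ p), ← hpq.one_sub_inv,
    mul_comm (b ^ p)] at hyoung

lemma one_add_mul_rpow_le {C w w' a b : ℝ} (hp : 1 < p) (hC : 0 ≤ C) (hw : 1 ≤ w)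
    (hcoef : p ≤ C * (w + p - w')) (ha : 0 ≤ a) (hb : 0 ≤ b) :
    (1 + C * (w' - 1) / p) * b ^ p
      ≤ C * (w * b - (w - 1) * a) * b ^ (p - 1) + C * (w - 1) / p * a ^ p := by
  have hyoung : C * (w - 1) * (a * b ^ (p - 1))
      ≤ C * (w - 1) * (a ^ p / p + (1 - p⁻¹) * b ^ p) :=
    mul_le_mul_of_nonneg_left (mul_rpow_sub_one_le hp ha hb) (mul_nonneg hC (by linarith))
  have hpow : b ^ (p - 1) * b = b ^ p := by
    rw [← rpow_add_one' hb (by linarith), sub_add_cancel]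
  have hslack : 0 ≤ (C * (w - w') / p + C - 1) * b ^ p := by
    have hp0 : p ≠ 0 := by linarith
    have hrw : C * (w - w') / p + C - 1 = (C * (w + p - w') - p) / p := by field_simp; ring
    rw [hrw]
    exact mul_nonneg (div_nonneg (by linarith) (by linarith)) (rpow_nonneg hb p)
  linear_combination hyoung + hslack - C * w * hpow

lemma le_rpow_of_le_mul_rpow_one_sub_inv {S K : ℝ} (hp : 0 < p) (hS : 0 ≤ S) (hK : 0 ≤ K)
    (h : S ≤ K * S ^ (1 - p⁻¹)) : S ≤ K ^ p := by
  rcases hS.eq_or_lt with rfl | hS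
  · exact rpow_nonneg hK p
  have hroot : S ^ p⁻¹ ≤ K := by
    have hsplit : S = S ^ p⁻¹ * S ^ (1 - p⁻¹) := by
      rw [← rpow_add hS, add_sub_cancel, rpow_one]
    have h' : S ^ p⁻¹ * S ^ (1 - p⁻¹) ≤ K * S ^ (1 - p⁻¹) := by rwa [← hsplit]
    exact le_of_mul_le_mul_right h' (rpow_pos_of_pos hS _)
  calc S = (S ^ p⁻¹) ^ p := (rpow_inv_rpow hS.le hp.ne').symm
    _ ≤ K ^ p := rpow_le_rpow (rpow_nonneg hS.le _) hroot hp.le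

lemma sum_rpow_le_of_le_mul_sum_mul_rpow_sub_one {ι : Type*} (s : Finset ι) {a b : ι → ℝ}
    {C : ℝ} (hp : 1 < p) (hC : 0 ≤ C) (ha : ∀ i ∈ s, 0 ≤ a i) (hb : ∀ i ∈ s, 0 ≤ b i)
    (h : ∑ i ∈ s, a i ^ p ≤ C * ∑ i ∈ s, b i * a i ^ (p - 1)) :
    ∑ i ∈ s, a i ^ p ≤ C ^ p * ∑ i ∈ s, b i ^ p := by
  have hpq := HolderConjugate.conjExponent hp
  have hB : 0 ≤ ∑ i ∈ s, b i ^ p := sum_nonneg fun i hi => rpow_nonneg (hb i hi) p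
  have hholder : ∑ i ∈ s, b i * a i ^ (p - 1)
      ≤ (∑ i ∈ s, b i ^ p) ^ p⁻¹ * (∑ i ∈ s, a i ^ p) ^ (1 - p⁻¹) := by
    have := inner_le_Lp_mul_Lq_of_nonneg s hpq hb fun i hi => rpow_nonneg (ha i hi) (p - 1)
    refine this.trans_eq ?_
    rw [one_div, one_div, hpq.one_sub_inv]
    congr 2
    exact sum_congr rfl fun i hi => by rw [← rpow_mul (ha i hi), hpq.sub_one_mul_conj]
  calc ∑ i ∈ s, a i ^ p ≤ (C * (∑ i ∈ s, b i ^ p) ^ p⁻¹) ^ p := by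
        refine le_rpow_of_le_mul_rpow_one_sub_inv (by linarith)
          (sum_nonneg fun i hi => rpow_nonneg (ha i hi) p) (by positivity) ?_
        calc _ ≤ C * ∑ i ∈ s, b i * a i ^ (p - 1) := h
          _ ≤ _ := by rw [mul_assoc]; exact mul_le_mul_of_nonneg_left hholder hC
    _ = C ^ p * ∑ i ∈ s, b i ^ p := by
        rw [mul_rpow hC (by positivity), rpow_inv_rpow hB (by linarith)]

end RealInequalities

lemma sum_range_add_le_of_add_le_add {α : Type*} [AddCommMonoid α] [PartialOrder α]
    [IsOrderedAddMonoid α] {f g E : ℕ → α} (h : ∀ n, f n + E (n + 1) ≤ g n + E n) (N : ℕ) :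
    ∑ n ∈ range N, f n + E N ≤ ∑ n ∈ range N, g n + E 0 := by
  induction N with
  | zero => simp
  | succ N ih =>
    calc ∑ n ∈ range (N + 1), f n + E (N + 1)
        = ∑ n ∈ range N, f n + (f N + E (N + 1)) := by rw [sum_range_succ, add_assoc]
      _ ≤ ∑ n ∈ range N, f n + (g N + E N) := add_le_add le_rfl (h N)
      _ = ∑ n ∈ range N, f n + E N + g N := by abel
      _ ≤ ∑ n ∈ range N, g n + E 0 + g N := add_le_add ih le_rfl
      _ = ∑ n ∈ range (N + 1), g n + E 0 := by rw [sum_range_succ]; abel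

lemma tsum_ofReal_le_ofReal_mul_tsum_ofReal {f g : ℕ → ℝ} {c : ℝ} (hf : ∀ n, 0 ≤ f n)
    (hg : ∀ n, 0 ≤ g n) (hc : 0 ≤ c) (h : ∀ N, ∑ n ∈ range N, f n ≤ c * ∑ n ∈ range N, g n) :
    ∑' n, ENNReal.ofReal (f n) ≤ ENNReal.ofReal c * ∑' n, ENNReal.ofReal (g n) := by
  refine ENNReal.tsum_le_of_sum_range_le fun N => ?_
  calc ∑ n ∈ range N, ENNReal.ofReal (f n)
      = ENNReal.ofReal (∑ n ∈ range N, f n) :=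
        (ENNReal.ofReal_sum_of_nonneg fun n _ => hf n).symm
    _ ≤ ENNReal.ofReal (c * ∑ n ∈ range N, g n) := ENNReal.ofReal_le_ofReal (h N)
    _ = ENNReal.ofReal c * ∑ n ∈ range N, ENNReal.ofReal (g n) := by
        rw [ENNReal.ofReal_mul hc, ENNReal.ofReal_sum_of_nonneg fun n _ => hg n]
    _ ≤ ENNReal.ofReal c * ∑' n, ENNReal.ofReal (g n) := by
        gcongr
        exact ENNReal.sum_le_tsum _

noncomputable def weightedMean (l x : ℕ → ℝ) (n : ℕ) : ℝ :=
  (∑ k ∈ Icc 1 n, l k * x k) / ∑ k ∈ Icc 1 n, l k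

noncomputable def partialSumRatio (l : ℕ → ℝ) (n : ℕ) : ℝ :=
  (∑ k ∈ Icc 1 n, l k) / l n

section WeightedMean

variable {l x : ℕ → ℝ}

@[simp]
lemma weightedMean_zero : weightedMean l x 0 = 0 := by
  simp [weightedMean]

lemma weightedMean_nonneg (hl : ∀ n, 1 ≤ n → 0 ≤ l n) (hx : ∀ n, 1 ≤ n → 0 ≤ x n) (n : ℕ) :
    0 ≤ weightedMean l x n := by
  unfold weightedMean
  refine div_nonneg (sum_nonneg fun k hk => ?_) (sum_nonneg fun k hk => ?_)
  · exact mul_nonneg (hl k (mem_Icc.1 hk).1) (hx k (mem_Icc.1 hk).1)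
  · exact hl k (mem_Icc.1 hk).1

lemma sum_Icc_pos (hl : ∀ n, 1 ≤ n → 0 < l n) {n : ℕ} (hn : 1 ≤ n) :
    0 < ∑ k ∈ Icc 1 n, l k :=
  sum_pos (fun k hk => hl k (mem_Icc.1 hk).1) ⟨1, mem_Icc.2 ⟨le_rfl, hn⟩⟩

lemma one_le_partialSumRatio (hl : ∀ n, 1 ≤ n → 0 < l n) {n : ℕ} (hn : 1 ≤ n) :
    1 ≤ partialSumRatio l n := by
  rw [partialSumRatio, one_le_div (hl n hn)]
  exact single_le_sum (fun k hk => (hl k (mem_Icc.1 hk).1).le) (mem_Icc.2 ⟨hn, le_rfl⟩)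

lemma sum_Icc_mul_weightedMean (hl : ∀ n, 1 ≤ n → 0 < l n) (n : ℕ) :
    (∑ k ∈ Icc 1 n, l k) * weightedMean l x n = ∑ k ∈ Icc 1 n, l k * x k := by
  rcases Nat.eq_zero_or_pos n with rfl | hn
  · simp
  · exact mul_div_cancel₀ _ (sum_Icc_pos hl hn).ne'

lemma eq_weightedMean_succ (hl : ∀ n, 1 ≤ n → 0 < l n) (n : ℕ) :
    x (n + 1) = partialSumRatio l (n + 1) * weightedMean l x (n + 1)
      - (partialSumRatio l (n + 1) - 1) * weightedMean l x n := by
  have hl' : l (n + 1) ≠ 0 := (hl (n + 1) n.succ_pos).ne'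
  have hnext := sum_Icc_mul_weightedMean (x := x) hl (n + 1)
  have hprev := sum_Icc_mul_weightedMean (x := x) hl n
  have h1 : 1 ≤ n + 1 := by omega
  rw [sum_Icc_succ_top h1, sum_Icc_succ_top h1] at hnext
  rw [partialSumRatio, sum_Icc_succ_top h1]
  field_simp
  linear_combination hprev - hnext

variable {p L : ℝ}

lemma weightedMean_rpow_step (hp : 1 < p) (hLp : L < p) (hl : ∀ n, 1 ≤ n → 0 < l n)
    (hx : ∀ n, 1 ≤ n → 0 ≤ x n)
    (hratio : ∀ n, partialSumRatio l (n + 2) - partialSumRatio l (n + 1) ≤ L) (n : ℕ) :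
    weightedMean l x (n + 1) ^ p
        + p / (p - L) * (partialSumRatio l (n + 2) - 1) / p * weightedMean l x (n + 1) ^ p
      ≤ p / (p - L) * (x (n + 1) * weightedMean l x (n + 1) ^ (p - 1))
        + p / (p - L) * (partialSumRatio l (n + 1) - 1) / p * weightedMean l x n ^ p := by
  have hC : 0 ≤ p / (p - L) := div_nonneg (by linarith) (by linarith)
  have hcoef : p ≤ p / (p - L) * (partialSumRatio l (n + 1) + p - partialSumRatio l (n + 2)) :=
    calc p = p / (p - L) * (p - L) := (div_mul_cancel₀ _ (by linarith)).symm
      _ ≤ _ := mul_le_mul_of_nonneg_left (by linarith [hratio n]) hC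
  have hA := weightedMean_nonneg (fun n hn => (hl n hn).le) hx
  have h := one_add_mul_rpow_le hp hC (one_le_partialSumRatio hl n.succ_pos) hcoef (hA n)
    (hA (n + 1))
  rw [← eq_weightedMean_succ hl] at h
  linear_combination h

lemma sum_weightedMean_rpow_le (hp : 1 < p) (hLp : L < p) (hl : ∀ n, 1 ≤ n → 0 < l n)
    (hx : ∀ n, 1 ≤ n → 0 ≤ x n)
    (hratio : ∀ n, partialSumRatio l (n + 2) - partialSumRatio l (n + 1) ≤ L) (N : ℕ) :
    ∑ n ∈ range N, weightedMean l x (n + 1) ^ p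
      ≤ p / (p - L) * ∑ n ∈ range N, x (n + 1) * weightedMean l x (n + 1) ^ (p - 1) := by
  set D : ℕ → ℝ := fun n => p / (p - L) * (partialSumRatio l (n + 1) - 1) / p
  have h := sum_range_add_le_of_add_le_add (f := fun n => weightedMean l x (n + 1) ^ p)
    (E := fun n => D n * weightedMean l x n ^ p)
    (weightedMean_rpow_step hp hLp hl hx hratio) N
  have hD : 0 ≤ D N := div_nonneg (mul_nonneg (div_nonneg (by linarith) (by linarith))
    (by linarith [one_le_partialSumRatio hl N.succ_pos])) (by linarith)
  have hE : 0 ≤ D N * weightedMean l x N ^ p :=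
    mul_nonneg hD (rpow_nonneg (weightedMean_nonneg (fun n hn => (hl n hn).le) hx N) p)
  simp only [weightedMean_zero, zero_rpow (by linarith : p ≠ 0), mul_zero, add_zero] at h
  rw [mul_sum]
  linarith

end WeightedMean

theorem stmt_13_general (p : ℝ) (hp : 1 < p)
    (l : ℕ → ℝ) (hl : ∀ n, 1 ≤ n → 0 < l n)
    (Λ : ℕ → ℝ) (hΛ : ∀ n, Λ n = ∑ k ∈ Finset.Icc 1 n, l k)
    (L : ℝ)
    (hL : IsLUB (Set.range fun n : ℕ => Λ (n + 2) / l (n + 2) - Λ (n + 1) / l (n + 1)) L)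
    (hLp : L < p)
    (x : ℕ → ℝ) (hx : ∀ n, 1 ≤ n → 0 ≤ x n) :
    ∑' n : ℕ, ENNReal.ofReal (((1 / Λ (n + 1)) * ∑ k ∈ Finset.Icc 1 (n + 1), l k * x k) ^ p)
      ≤ ENNReal.ofReal ((p / (p - L)) ^ p) * ∑' n : ℕ, ENNReal.ofReal (x (n + 1) ^ p) := by
  obtain rfl : Λ = fun n => ∑ k ∈ Icc 1 n, l k := funext hΛ
  have hratio : ∀ n, partialSumRatio l (n + 2) - partialSumRatio l (n + 1) ≤ L :=
    fun n => hL.1 ⟨n, rfl⟩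
  have hC : 0 ≤ p / (p - L) := div_nonneg (by linarith) (by linarith)
  have hA := weightedMean_nonneg (fun n hn => (hl n hn).le) hx
  simp only [one_div_mul_eq_div]
  refine tsum_ofReal_le_ofReal_mul_tsum_ofReal (fun n => rpow_nonneg (hA _) p)
    (fun n => rpow_nonneg (hx _ n.succ_pos) p) (rpow_nonneg hC p) fun N => ?_
  exact sum_rpow_le_of_le_mul_sum_mul_rpow_sub_one _ hp hC (fun n _ => hA _)
    (fun n _ => hx _ n.succ_pos) (sum_weightedMean_rpow_le hp hLp hl hx hratio N)

/-- Cartlidge's theorem. -/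
theorem stmt_13 (p : ℝ) (hp : 1 < p)
    (l : ℕ → ℝ) (hl : ∀ n, 1 ≤ n → 0 < l n)
    (Λ : ℕ → ℝ) (hΛ : ∀ n, Λ n = ∑ k ∈ Finset.Icc 1 n, l k)
    (L : ℝ)
    (hL : IsLUB (Set.range fun n : ℕ => Λ (n + 2) / l (n + 2) - Λ (n + 1) / l (n + 1)) L)
    (hLp : L < p)
    (x : ℕ → ℝ) (hx : ∀ n, 1 ≤ n → 0 ≤ x n)
    (hxsum : Summable fun n : ℕ => x (n + 1) ^ p) :
    ∑' n : ℕ, ENNReal.ofReal (((1 / Λ (n + 1)) * ∑ k ∈ Finset.Icc 1 (n + 1), l k * x k) ^ p)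
      ≤ ENNReal.ofReal ((p / (p - L)) ^ p) * ∑' n : ℕ, ENNReal.ofReal (x (n + 1) ^ p) :=
  stmt_13_general p hp l hl Λ hΛ L hL hLp x hx
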